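/- Under Assumption 5.1 (N a compact connected n-dimensional minimal totally real submanifold of a 2n-dimensional Kähler manifold M): (i) if i*Ric^M ≤ Ric^N then N is stable; (iii) if i*Ric^M > 2 Ric^N and N admits a nonzero Killing vector field, then N is unstable. -/

import Mathlib

/-- **Assumption 5.1 of Chen–Leung–Nagano** together with the data used in
Proposition 5.1.  `N` is a compact, connected, `n`-dimensional, minimal and
totally real submanifold of a `2n`-dimensional Kähler manifold `M` (so
`J(TN) = T⊥N`):

* `Tangent`/`Normal` are the spaces of tangent/normal vector fields, with
  `J : Tangent ≃ Normal` induced by the complex structure;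
* `secondVariation v` is the second variation of the volume of `N` in the
  normal direction `v`;
* `gradSq u = ∫_N ‖∇u‖² dV`, `ricciN u = ∫_N Ric^N(u,u) dV`,
  `ricciM u = ∫_N (i*Ric^M)(u,u) dV` (`i : N → M` the inclusion);
* `second_variation_eq` is Theorem 5.1:
  `𝒱''(Ju) = ∫_N (‖∇u‖² + Ric^N(u,u) − Ric^M(u,u)) dV`;
* `IsKilling u` says `u` is a Killing vector field of `N`, in which case
  `∫_N (‖∇u‖² − Ric^N(u,u)) dV = 0` (`killing_id`). -/
structure LagrangianMinimalSubmanifoldData where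
  Tangent : Type*
  Normal : Type*
  [tacg : AddCommGroup Tangent]
  [tmod : Module ℝ Tangent]
  [nacg : AddCommGroup Normal]
  [nmod : Module ℝ Normal]
  J : Tangent ≃ₗ[ℝ] Normal
  secondVariation : Normal → ℝ
  gradSq : Tangent → ℝ
  ricciN : Tangent → ℝ
  ricciM : Tangent → ℝ
  gradSq_nonneg : ∀ u, 0 ≤ gradSq u
  second_variation_eq : ∀ u, secondVariation (J u) = gradSq u + ricciN u - ricciM u
  /-- `u` is a Killing vector field of `N` -/
  IsKilling : Tangent → Prop
  /-- `∫_N (‖∇u‖² − Ric^N(u,u)) dV = 0` for a Killing field `u` -/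
  killing_id : ∀ u, IsKilling u → gradSq u = ricciN u

attribute [instance] LagrangianMinimalSubmanifoldData.tacg
  LagrangianMinimalSubmanifoldData.tmod LagrangianMinimalSubmanifoldData.nacg
  LagrangianMinimalSubmanifoldData.nmod

namespace LagrangianMinimalSubmanifoldData

variable (P : LagrangianMinimalSubmanifoldData)

theorem secondVariation_eq (v : P.Normal) :
    P.secondVariation v =
      P.gradSq (P.J.symm v) + P.ricciN (P.J.symm v) - P.ricciM (P.J.symm v) := by
  rw [← P.second_variation_eq, P.J.apply_symm_apply]

theorem secondVariation_nonneg_of_ricciM_le (h : ∀ u, P.ricciM u ≤ P.ricciN u)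
    (v : P.Normal) : 0 ≤ P.secondVariation v := by
  rw [P.secondVariation_eq]
  linarith [P.gradSq_nonneg (P.J.symm v), h (P.J.symm v)]

theorem secondVariation_J_of_isKilling {u : P.Tangent} (hu : P.IsKilling u) :
    P.secondVariation (P.J u) = 2 * P.ricciN u - P.ricciM u := by
  rw [P.second_variation_eq, P.killing_id u hu]
  ring

theorem secondVariation_J_neg_of_isKilling {u : P.Tangent} (hu : P.IsKilling u)
    (hric : 2 * P.ricciN u < P.ricciM u) : P.secondVariation (P.J u) < 0 := by
  rw [P.secondVariation_J_of_isKilling hu]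
  linarith

end LagrangianMinimalSubmanifoldData

/-- **Proposition 5.1 (i) and (iii).**  Under Assumption 5.1:

(i)  if `i*Ric^M ≤ Ric^N` then `N` is stable;

(iii) if `i*Ric^M > 2 Ric^N` and `N` admits a nonzero Killing vector field,
then `N` is unstable. -/
theorem stability_by_Ricci_comparison (P : LagrangianMinimalSubmanifoldData) :
    -- (i)
    ((∀ u : P.Tangent, P.ricciM u ≤ P.ricciN u) →
      ∀ v : P.Normal, 0 ≤ P.secondVariation v) ∧
    -- (iii)
    ((∀ u : P.Tangent, u ≠ 0 → 2 * P.ricciN u < P.ricciM u) →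
      (∃ u : P.Tangent, u ≠ 0 ∧ P.IsKilling u) →
      ∃ v : P.Normal, P.secondVariation v < 0) := by
  refine ⟨P.secondVariation_nonneg_of_ricciM_le, fun hric ⟨u, hu0, hu⟩ => ?_⟩
  exact ⟨P.J u, P.secondVariation_J_neg_of_isKilling hu (hric u hu0)⟩
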